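/- arXiv:2012.10927 — 5 statements merged into one kernel-verified Lean document; each statement's English description precedes it below -/
import Mathlib

section
/- In the general setup (arbitrary u with u(0)=0, u(1)=1), for every natural number h there exists a polynomial p with rational coefficients of degree at most h+1 such that p(j) = L_h(j) for every natural number j. -/
/-!
Write `F_j(t) = Σ_h ã_h(j) t^h`. Since `M_j` has degree `j`, `F_j(t) = j! t^j M_j(1/t)`, and the
differential equation `E' = n U' E` of `E = exp (n U)` turns into the recurrence
`F_{j+1} = Σ_a (a+1) u(a+1) j(j-1)⋯(j-a+1) t^a F_{j-a}`. Dividing by `F_j` and writing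
`F_{j-a} / F_j` as a product of inverses of earlier ratios, induction on `h` shows that the
`h`-th coefficient of `F_{j+1} / F_j` is a polynomial of degree `≤ h` in `j`, hence so is that of
`log (F_{j+1} / F_j)`. As `log F_j = Σ_{i<j} log (F_{i+1} / F_i)`, summing over `i` (Faulhaber)
raises the degree by one.
-/

/-- Formal exponential of a power series with zero constant coefficient over a
`ℚ`-algebra: `exp F = Σ_{k≥0} F^k / k!`.  Since `F` has zero constant coefficient,
only `k ≤ j` contributes to the coefficient of `x^j`, so this sum is exact. -/
noncomputable def expPS {A : Type*} [CommRing A] [Algebra ℚ A]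
    (F : PowerSeries A) : PowerSeries A :=
  PowerSeries.mk fun j =>
    ∑ k ∈ Finset.range (j + 1), (k.factorial : ℚ)⁻¹ • PowerSeries.coeff (R := A) j (F ^ k)

/-- `Mj u j` is the coefficient of `x^j` in `exp (n · U(x))`, a polynomial in `n`,
where `U(x) = Σ_{s≥1} u s · x^s` (here `n` is the polynomial variable `X`). -/
noncomputable def Mj (u : ℕ → ℚ) (j : ℕ) : Polynomial ℚ :=
  PowerSeries.coeff (R := Polynomial ℚ) j
    (expPS (PowerSeries.mk fun s => Polynomial.C (u s) * Polynomial.X))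

/-- `atilde u h j = j! · (coefficient of n^{j−h} in M_j)` for `h ≤ j`, and `0` for `h > j`. -/
noncomputable def atilde (u : ℕ → ℚ) (h j : ℕ) : ℚ :=
  if h ≤ j then (j.factorial : ℚ) * (Mj u j).coeff (j - h) else 0

/-- The coefficient of `t^h` in `log (1 + V)` for a power series `V` with zero constant
coefficient: `[t^h] Σ_{m≥1} (−1)^{m+1} V^m / m` (only `m ≤ h` contributes). -/
noncomputable def logCoeffOneAdd (V : PowerSeries ℚ) (h : ℕ) : ℚ :=
  ∑ m ∈ Finset.Icc 1 h, ((-1 : ℚ) ^ (m + 1) / m) * PowerSeries.coeff (R := ℚ) h (V ^ m)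

/-- `Lh u h j` is the coefficient of `t^h` in `log (1 + Σ_{s≥1} ã_s(j) t^s)`. -/
noncomputable def Lh (u : ℕ → ℚ) (h j : ℕ) : ℚ :=
  logCoeffOneAdd (PowerSeries.mk fun s => if s = 0 then 0 else atilde u s j) h

open Finset
open scoped Polynomial

noncomputable def polySeq (d : ℕ) : Submodule ℚ (ℕ → ℚ) :=
  (Polynomial.degreeLE ℚ d).map (LinearMap.pi fun i : ℕ => Polynomial.leval (i : ℚ))

namespace polySeq

open Polynomial

lemma mem_iff {d : ℕ} {f : ℕ → ℚ} :
    f ∈ polySeq d ↔ ∃ p : ℚ[X], p.natDegree ≤ d ∧ ∀ i : ℕ, p.eval (i : ℚ) = f i := by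
  simp [polySeq, mem_degreeLE, natDegree_le_iff_degree_le, funext_iff]

lemma mono {d e : ℕ} (h : d ≤ e) : polySeq d ≤ polySeq e :=
  Submodule.map_mono (degreeLE_mono (by exact_mod_cast h))

lemma const_mem (c : ℚ) (d : ℕ) : (fun _ => c) ∈ polySeq d :=
  mem_iff.mpr ⟨C c, by simp, fun _ => eval_C⟩

lemma eq_const_of_mem_zero {f : ℕ → ℚ} (hf : f ∈ polySeq 0) : f = fun _ => f 0 := by
  obtain ⟨p, hp, hpf⟩ := mem_iff.mp hf
  obtain ⟨c, rfl⟩ := natDegree_eq_zero.mp (Nat.le_zero.mp hp)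
  ext i
  rw [← hpf, ← hpf, eval_C, eval_C]

lemma mul_mem {d e : ℕ} {f g : ℕ → ℚ} (hf : f ∈ polySeq d) (hg : g ∈ polySeq e) :
    f * g ∈ polySeq (d + e) := by
  obtain ⟨p, hp, hpf⟩ := mem_iff.mp hf
  obtain ⟨q, hq, hqg⟩ := mem_iff.mp hg
  exact mem_iff.mpr ⟨p * q, natDegree_mul_le.trans (add_le_add hp hq),
    fun i => by rw [eval_mul, hpf, hqg, Pi.mul_apply]⟩

lemma comp_add_mem {d : ℕ} {f : ℕ → ℚ} (hf : f ∈ polySeq d) (m : ℕ) :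
    (fun i => f (i + m)) ∈ polySeq d := by
  obtain ⟨p, hp, hpf⟩ := mem_iff.mp hf
  refine mem_iff.mpr ⟨p.comp (X + C (m : ℚ)), ?_, fun i => ?_⟩
  · rwa [natDegree_comp, natDegree_X_add_C, mul_one]
  · rw [eval_comp, eval_add, eval_X, eval_C, ← hpf, Nat.cast_add]

lemma descFactorial_mul_comp_sub_mem {d : ℕ} {f : ℕ → ℚ} (hf : f ∈ polySeq d) (a : ℕ) :
    (fun j => (j.descFactorial a : ℚ) * f (j - a)) ∈ polySeq (a + d) := by
  obtain ⟨p, hp, hpf⟩ := mem_iff.mp hf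
  refine mem_iff.mpr ⟨descPochhammer ℚ a * p.comp (X - C (a : ℚ)), ?_, fun j => ?_⟩
  · refine natDegree_mul_le.trans (add_le_add (descPochhammer_natDegree ℚ a).le ?_)
    rwa [natDegree_comp, natDegree_X_sub_C, mul_one]
  · rw [eval_mul, descPochhammer_eval_eq_descFactorial, eval_comp, eval_sub, eval_X, eval_C]
    rcases le_or_gt a j with haj | hja
    · rw [← Nat.cast_sub haj, hpf]
    · rw [Nat.descFactorial_eq_zero_iff_lt.mpr hja, Nat.cast_zero, zero_mul, zero_mul]

lemma sum_range_pow_mem (k : ℕ) :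
    (fun n : ℕ => ∑ i ∈ range n, (i : ℚ) ^ k) ∈ polySeq (k + 1) := by
  refine mem_iff.mpr ⟨C ((k : ℚ) + 1)⁻¹ *
    (Polynomial.bernoulli (k + 1) - C (_root_.bernoulli (k + 1))), ?_, fun n => ?_⟩
  · refine natDegree_C_mul_le _ _ |>.trans <| natDegree_sub_le _ _ |>.trans <| max_le ?_ (by simp)
    rw [bernoulli_def]
    refine natDegree_sum_le_of_forall_le _ _ fun i hi =>
      (natDegree_monomial_le _).trans (Nat.lt_succ_iff.mp (mem_range.mp hi))
  · rw [eval_mul, eval_C, eval_sub, eval_C, ← sum_range_pow_eq_bernoulli_sub]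
    field_simp

lemma sum_range_mem {d : ℕ} {f : ℕ → ℚ} (hf : f ∈ polySeq d) :
    (fun n => ∑ i ∈ range n, f i) ∈ polySeq (d + 1) := by
  obtain ⟨p, hp, hpf⟩ := mem_iff.mp hf
  have hexp : (fun n => ∑ i ∈ range n, f i) =
      ∑ k ∈ range (d + 1), p.coeff k • fun n : ℕ => ∑ i ∈ range n, (i : ℚ) ^ k := by
    ext n
    simp only [← hpf, eval_eq_sum_range' (Nat.lt_succ_of_le hp), Finset.sum_apply, Pi.smul_apply,
      smul_eq_mul, mul_sum]
    exact Finset.sum_comm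
  rw [hexp]
  exact Submodule.sum_mem _ fun k hk =>
    Submodule.smul_mem _ _ (mono (mem_range.mp hk) (sum_range_pow_mem k))

end polySeq

open PowerSeries

namespace PowerSeries

variable {A : Type*} [CommRing A]

lemma coeff_pow_eq_zero_of_lt {b : A⟦X⟧} (hb : constantCoeff b = 0) {n d : ℕ} (hnd : n < d) :
    coeff n (b ^ d) = 0 :=
  X_pow_dvd_iff.mp (pow_dvd_pow_of_dvd (X_dvd_iff.mpr hb) d) n hnd

lemma coeff_subst_eq_sum_range {b : A⟦X⟧} (hb : constantCoeff b = 0) (f : A⟦X⟧) (n : ℕ) :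
    coeff n (f.subst b) = ∑ d ∈ range (n + 1), coeff d f * coeff n (b ^ d) := by
  rw [coeff_subst' (.of_constantCoeff_zero' hb)]
  refine finsum_eq_sum_of_support_subset _ fun d hd => ?_
  by_contra hdn
  simp only [coe_range, Set.mem_Iio, not_lt] at hdn
  exact hd (by simp only [coeff_pow_eq_zero_of_lt hb (by omega : n < d), smul_zero])

lemma val_inv_unit {k : Type*} [Field k] (v : k⟦X⟧ˣ) : ((v⁻¹ : k⟦X⟧ˣ) : k⟦X⟧) = (v : k⟦X⟧)⁻¹ :=
  (eq_inv_iff_mul_eq_one (isUnit_iff_constantCoeff.mp v.isUnit).ne_zero).mpr v.inv_mul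

variable [Algebra ℚ A]

lemma expPS_eq_subst_exp {F : A⟦X⟧} (hF : constantCoeff F = 0) : expPS F = (exp A).subst F := by
  ext j
  rw [expPS, coeff_mk, coeff_subst_eq_sum_range hF]
  refine sum_congr rfl fun k _ => ?_
  rw [coeff_exp, Algebra.smul_def, one_div]

lemma derivative_expPS {F : A⟦X⟧} (hF : constantCoeff F = 0) :
    d⁄dX A (expPS F) = expPS F * d⁄dX A F := by
  rw [expPS_eq_subst_exp hF, derivative_subst (.of_constantCoeff_zero' hF), derivative_exp]

lemma derivative_log_mul_one_add_X : d⁄dX A (log A) * (1 + X) = 1 := by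
  ext (_ | n) <;> simp [deriv_log, mul_add, coeff_one, pow_succ]

lemma derivative_logOf_mul_self {f : A⟦X⟧} (hf : constantCoeff f = 1) :
    d⁄dX A (logOf f) * f = d⁄dX A f := by
  have hs : HasSubst (f - 1) := .of_constantCoeff_zero' (by simp [hf])
  have hinv : (d⁄dX A (log A)).subst (f - 1) * f = 1 := by
    rw [← coe_substAlgHom hs]
    calc substAlgHom hs (d⁄dX A (log A)) * f
        = substAlgHom hs (d⁄dX A (log A)) * substAlgHom hs (1 + X : A⟦X⟧) := by
          rw [map_add, map_one, substAlgHom_X, add_sub_cancel]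
      _ = 1 := by rw [← map_mul, derivative_log_mul_one_add_X, map_one]
  rw [logOf_eq, derivative_subst hs, map_sub, Derivation.map_one_eq_zero, sub_zero,
    mul_right_comm, hinv, one_mul]

lemma logOf_one : logOf (1 : A⟦X⟧) = 0 := by
  rw [logOf_eq, sub_self, subst_zero_of_constantCoeff_zero constantCoeff_log]

lemma logOf_mul {f g : A⟦X⟧} (hf : constantCoeff f = 1) (hg : constantCoeff g = 1) :
    logOf (f * g) = logOf f + logOf g := by
  have : IsAddTorsionFree A := .of_module_rat A
  have hfg : constantCoeff (f * g) = 1 := by rw [map_mul, hf, hg, one_mul]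
  refine derivative.ext ?_ (by simp [constantCoeff_logOf, hf, hg, hfg])
  refine (isUnit_iff_constantCoeff.mpr (hfg ▸ isUnit_one)).mul_right_cancel ?_
  calc d⁄dX A (logOf (f * g)) * (f * g) = d⁄dX A f * g + f * d⁄dX A g := by
        rw [derivative_logOf_mul_self hfg, Derivation.leibniz, smul_eq_mul, smul_eq_mul]; ring
    _ = (d⁄dX A (logOf f) * f) * g + f * (d⁄dX A (logOf g) * g) := by
        rw [derivative_logOf_mul_self hf, derivative_logOf_mul_self hg]
    _ = d⁄dX A (logOf f + logOf g) * (f * g) := by rw [map_add]; ring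

lemma logOf_prod {ι : Type*} (s : Finset ι) (f : ι → A⟦X⟧) (hf : ∀ i ∈ s, constantCoeff (f i) = 1) :
    logOf (∏ i ∈ s, f i) = ∑ i ∈ s, logOf (f i) := by
  classical
  induction s using Finset.induction_on with
  | empty => simp [logOf_one]
  | insert i s hi ih =>
    rw [prod_insert hi, sum_insert hi, logOf_mul (hf i (by simp)), ih]
    · exact fun k hk => hf k (by simp [hk])
    · rw [map_prod]; exact prod_eq_one fun k hk => hf k (by simp [hk])

lemma coeff_logOf_one_add {V : ℚ⟦X⟧} (hV : constantCoeff V = 0) (h : ℕ) :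
    coeff h (logOf (1 + V)) = logCoeffOneAdd V h := by
  have hsub : Icc 1 h ⊆ range (h + 1) := fun m hm => by
    simp only [mem_Icc, mem_range] at hm ⊢; omega
  rw [logOf_eq, add_sub_cancel_left, coeff_subst_eq_sum_range hV, logCoeffOneAdd,
    ← sum_subset hsub fun d hd hd' => ?_]
  · refine sum_congr rfl fun m hm => ?_
    have : m ≠ 0 := by simp only [mem_Icc] at hm; omega
    simp [this]
  · have : d = 0 := by simp only [mem_Icc, mem_range] at hd hd'; omega
    simp [this]

end PowerSeries

noncomputable def polyCoeffFamilies (N : ℕ) : Subalgebra ℚ (ℕ → ℚ⟦X⟧) where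
  carrier := {g | ∀ h < N, (fun i => coeff h (g i)) ∈ polySeq h}
  mul_mem' {g g'} hg hg' h hh := by
    have hexp : (fun i => coeff h ((g * g') i)) = ∑ p ∈ antidiagonal h,
        (fun i => coeff p.1 (g i)) * fun i => coeff p.2 (g' i) := by
      ext i
      simp [coeff_mul, Finset.sum_apply]
    rw [hexp]
    refine Submodule.sum_mem _ fun p hp => ?_
    have hp : p.1 + p.2 = h := HasAntidiagonal.mem_antidiagonal.mp hp
    exact hp ▸ polySeq.mul_mem (hg _ (by omega)) (hg' _ (by omega))
  add_mem' {g g'} hg hg' h hh := by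
    simp only [Pi.add_apply, map_add]
    exact add_mem (hg h hh) (hg' h hh)
  algebraMap_mem' c h _ := by
    simpa using polySeq.mono (Nat.zero_le h) (polySeq.const_mem (coeff h (C c)) 0)

namespace polyCoeffFamilies

variable {N : ℕ} {g : ℕ → ℚ⟦X⟧}

lemma comp_add_mem (hg : g ∈ polyCoeffFamilies N) (m : ℕ) :
    (fun i => g (i + m)) ∈ polyCoeffFamilies N :=
  fun h hh => polySeq.comp_add_mem (hg h hh) m

lemma inv_mem (hg : g ∈ polyCoeffFamilies N) : g⁻¹ ∈ polyCoeffFamilies N := by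
  intro h hh
  induction h using Nat.strong_induction_on with
  | _ h ih =>
  have hc : ∀ i, constantCoeff (g i) = constantCoeff (g 0) := fun i => by
    simpa only [coeff_zero_eq_constantCoeff_apply] using
      congrFun (polySeq.eq_const_of_mem_zero (hg 0 (by omega))) i
  rcases Nat.eq_zero_or_pos h with rfl | hpos
  · convert polySeq.const_mem (constantCoeff (g 0))⁻¹ 0 using 1
    ext i
    simp [coeff_inv, hc]
  · have hexp : (fun i => coeff h (g⁻¹ i)) = -(constantCoeff (g 0))⁻¹ •
        ∑ x ∈ antidiagonal h,
          if x.2 < h then (fun i => coeff x.1 (g i)) * (fun i => coeff x.2 (g⁻¹ i)) else 0 := by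
      ext i
      rw [Pi.inv_apply, coeff_inv, if_neg hpos.ne', hc]
      simp only [Pi.smul_apply, Finset.sum_apply, smul_eq_mul, neg_mul]
      congr 2
      refine sum_congr rfl fun x _ => ?_
      split_ifs <;> rfl
    rw [hexp]
    refine Submodule.smul_mem _ _ (Submodule.sum_mem _ fun x hx => ?_)
    have hx : x.1 + x.2 = h := HasAntidiagonal.mem_antidiagonal.mp hx
    split_ifs with hlt
    · exact hx ▸ polySeq.mul_mem (hg _ (by omega)) (ih _ hlt (by omega))
    · exact zero_mem _

lemma subst_mem (f : ℚ⟦X⟧) (hg : g ∈ polyCoeffFamilies N) (hg0 : ∀ i, constantCoeff (g i) = 0) :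
    (fun i => f.subst (g i)) ∈ polyCoeffFamilies N := by
  intro h hh
  have hexp : (fun i => coeff h (f.subst (g i))) =
      ∑ d ∈ range (h + 1), coeff d f • fun i => coeff h ((g ^ d) i) := by
    ext i
    simp [coeff_subst_eq_sum_range (hg0 i), Finset.sum_apply]
  rw [hexp]
  exact Submodule.sum_mem _ fun d _ => Submodule.smul_mem _ _ (pow_mem hg d h hh)

end polyCoeffFamilies

section UnitFamily

variable {F : ℕ → ℚ⟦X⟧ˣ} {c : ℕ → ℚ}

lemma val_div_add_eq_prod_inv (i a : ℕ) : ((F i / F (i + a) : ℚ⟦X⟧ˣ) : ℚ⟦X⟧) =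
    ∏ l ∈ range a, (((F (i + l + 1) / F (i + l) : ℚ⟦X⟧ˣ) : ℚ⟦X⟧))⁻¹ := by
  have := prod_range_div (fun l => F (i + l)) a
  simp only [← add_assoc, add_zero] at this
  rw [← inv_div, ← this, ← prod_inv_distrib, Units.coe_prod]
  simp only [val_inv_unit]

variable (hF : ∀ j, (F (j + 1) : ℚ⟦X⟧) =
    ∑ a ∈ range (j + 1), (c a * j.descFactorial a) • (X ^ a * (F (j - a) : ℚ⟦X⟧)))
include hF

-- `F (j - a + a) = F j` unless `j < a`, where the factor `j.descFactorial a` vanishes; this form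
-- exhibits the coefficient as a function of `j - a`.
lemma coeff_val_div_succ (N j : ℕ) :
    coeff N ((F (j + 1) / F j : ℚ⟦X⟧ˣ) : ℚ⟦X⟧) = ∑ a ∈ range (N + 1),
      c a * (j.descFactorial a * coeff (N - a) ((F (j - a) / F (j - a + a) : ℚ⟦X⟧ˣ) : ℚ⟦X⟧)) := by
  set T : ℕ → ℚ := fun a =>
    c a * (j.descFactorial a * coeff (N - a) ((F (j - a) / F (j - a + a) : ℚ⟦X⟧ˣ) : ℚ⟦X⟧))
  have hT : ∀ a > j, T a = 0 := fun a ha => by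
    simp [T, Nat.descFactorial_eq_zero_iff_lt.mpr ha]
  have hterm : ∀ a, coeff N ((c a * j.descFactorial a) • (X ^ a * (F (j - a) : ℚ⟦X⟧)) *
      (((F j)⁻¹ : ℚ⟦X⟧ˣ) : ℚ⟦X⟧)) = if a ≤ N then T a else 0 := fun a => by
    rcases le_or_gt a j with haj | hja
    · rw [smul_mul_assoc, mul_assoc, ← Units.val_mul, ← div_eq_mul_inv, coeff_smul,
        coeff_X_pow_mul']
      split_ifs <;> simp [T, Nat.sub_add_cancel haj, mul_assoc]
    · simp [hT a hja, Nat.descFactorial_eq_zero_iff_lt.mpr hja]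
  have hvanish : ∀ a ≥ min j N + 1, (if a ≤ N then T a else 0) = 0 := fun a ha => by
    split_ifs
    exacts [hT a (by omega), rfl]
  rw [div_eq_mul_inv, Units.val_mul, hF, sum_mul, map_sum]
  simp only [hterm]
  rw [eventually_constant_sum hvanish (by omega : min j N + 1 ≤ j + 1),
    ← eventually_constant_sum hvanish (by omega : min j N + 1 ≤ N + 1)]
  exact sum_congr rfl fun a ha => if_pos (Nat.lt_succ_iff.mp (mem_range.mp ha))

theorem val_div_succ_mem_polyCoeffFamilies (N : ℕ) :
    (fun j => ((F (j + 1) / F j : ℚ⟦X⟧ˣ) : ℚ⟦X⟧)) ∈ polyCoeffFamilies N := by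
  induction N with
  | zero => exact fun h hh => absurd hh (Nat.not_lt_zero h)
  | succ N ih =>
    intro h hh
    rcases Nat.lt_succ_iff_lt_or_eq.mp hh with hlt | rfl
    · exact ih h hlt
    -- for `a ≥ 1` only coefficients of index `< h` of `F i / F (i + a) = ∏ (ratio)⁻¹` enter
    have hE : ∀ a ≤ h, (fun i => coeff (h - a) ((F i / F (i + a) : ℚ⟦X⟧ˣ) : ℚ⟦X⟧)) ∈
        polySeq (h - a) := by
      rintro (_ | a) ha
      · simpa using polySeq.const_mem (coeff h (1 : ℚ⟦X⟧)) h
      · have hprod : (fun i => ((F i / F (i + (a + 1)) : ℚ⟦X⟧ˣ) : ℚ⟦X⟧)) =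
            ∏ l ∈ range (a + 1), (fun i => ((F (i + l + 1) / F (i + l) : ℚ⟦X⟧ˣ) : ℚ⟦X⟧))⁻¹ := by
          ext1 i
          rw [val_div_add_eq_prod_inv, prod_apply]
          rfl
        have hmem : (fun i => ((F i / F (i + (a + 1)) : ℚ⟦X⟧ˣ) : ℚ⟦X⟧)) ∈ polyCoeffFamilies h :=
          hprod ▸ prod_mem fun l _ =>
            polyCoeffFamilies.inv_mem (polyCoeffFamilies.comp_add_mem ih l)
        exact hmem _ (by omega)
    have hexp : (fun j => coeff h ((F (j + 1) / F j : ℚ⟦X⟧ˣ) : ℚ⟦X⟧)) =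
        ∑ a ∈ range (h + 1), c a • fun j => (j.descFactorial a : ℚ) *
          (fun i => coeff (h - a) ((F i / F (i + a) : ℚ⟦X⟧ˣ) : ℚ⟦X⟧)) (j - a) := by
      ext j
      simp [coeff_val_div_succ hF]
    rw [hexp]
    refine Submodule.sum_mem _ fun a ha => Submodule.smul_mem _ _ ?_
    have ha : a ≤ h := Nat.lt_succ_iff.mp (mem_range.mp ha)
    simpa [Nat.add_sub_cancel' ha] using polySeq.descFactorial_mul_comp_sub_mem (hE a ha) a

theorem coeff_logOf_mem_polySeq (hF0 : F 0 = 1) (hcc : ∀ j, constantCoeff (F j : ℚ⟦X⟧) = 1)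
    (h : ℕ) : (fun j => coeff h (logOf (F j : ℚ⟦X⟧))) ∈ polySeq (h + 1) := by
  have hratio : ∀ i, constantCoeff ((F (i + 1) / F i : ℚ⟦X⟧ˣ) : ℚ⟦X⟧) = 1 := fun i => by
    rw [div_eq_mul_inv, Units.val_mul, map_mul, val_inv_unit, constantCoeff_inv, hcc, hcc,
      inv_one, mul_one]
  have hlog : ∀ j, logOf (F j : ℚ⟦X⟧) =
      ∑ i ∈ range j, logOf ((F (i + 1) / F i : ℚ⟦X⟧ˣ) : ℚ⟦X⟧) := fun j => by
    rw [← logOf_prod _ _ fun i _ => hratio i, ← Units.coe_prod, prod_range_div, hF0, div_one]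
  simp_rw [hlog, map_sum]
  refine polySeq.sum_range_mem ?_
  have hsub := sub_mem (val_div_succ_mem_polyCoeffFamilies hF (h + 1)) (one_mem _)
  simpa [logOf_eq] using polyCoeffFamilies.subst_mem (log ℚ) hsub (fun i => by simp [hratio]) h
    (lt_add_one h)

end UnitFamily

lemma Polynomial.reflect_sum {R ι : Type*} [Semiring R] (s : Finset ι) (f : ι → R[X]) (N : ℕ) :
    Polynomial.reflect N (∑ i ∈ s, f i) = ∑ i ∈ s, Polynomial.reflect N (f i) :=
  map_sum (⟨⟨Polynomial.reflect N, Polynomial.reflect_zero⟩,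
    fun f g => Polynomial.reflect_add f g N⟩ : R[X] →+ R[X]) f s

section Mj

variable (u : ℕ → ℚ)

lemma Mj_zero : Mj u 0 = 1 := by
  simp [Mj, expPS]

lemma Mj_succ (hu0 : u 0 = 0) (j : ℕ) :
    Polynomial.C ((j : ℚ) + 1) * Mj u (j + 1) = ∑ a ∈ range (j + 1),
      Polynomial.C (((a : ℚ) + 1) * u (a + 1)) * (Polynomial.X * Mj u (j - a)) := by
  have hF : constantCoeff (PowerSeries.mk fun s => Polynomial.C (u s) * Polynomial.X) = 0 := by
    simp [hu0]
  have := congrArg (coeff j) ((derivative_expPS hF).trans (mul_comm _ _))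
  rw [coeff_derivative, coeff_mul, Nat.sum_antidiagonal_eq_sum_range_succ_mk] at this
  rw [mul_comm, Mj, show Polynomial.C ((j : ℚ) + 1) = (j : ℚ[X]) + 1 by simp, this]
  refine sum_congr rfl fun a _ => ?_
  rw [coeff_derivative, coeff_mk, Mj]
  simp only [map_mul, map_add, map_natCast, map_one]
  ring

lemma natDegree_Mj_le (hu0 : u 0 = 0) (j : ℕ) : (Mj u j).natDegree ≤ j := by
  induction j using Nat.strong_induction_on with
  | _ j ih =>
  rcases j with _ | j
  · simp [Mj_zero u]
  · have h := congrArg Polynomial.natDegree (Mj_succ u hu0 j)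
    rw [Polynomial.natDegree_C_mul (by positivity)] at h
    rw [h]
    refine Polynomial.natDegree_sum_le_of_forall_le _ _ fun a ha => ?_
    have ha : a ≤ j := Nat.lt_succ_iff.mp (mem_range.mp ha)
    refine (Polynomial.natDegree_C_mul_le _ _).trans (Polynomial.natDegree_mul_le.trans ?_)
    have := ih (j - a) (by omega)
    have := Polynomial.natDegree_X_le (R := ℚ)
    omega

lemma reflect_Mj_succ (hu0 : u 0 = 0) (j : ℕ) :
    Polynomial.C ((j : ℚ) + 1) * (Mj u (j + 1)).reflect (j + 1) = ∑ a ∈ range (j + 1),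
      Polynomial.C (((a : ℚ) + 1) * u (a + 1)) *
        (Polynomial.X ^ a * (Mj u (j - a)).reflect (j - a)) := by
  rw [← Polynomial.reflect_C_mul, Mj_succ u hu0 j, Polynomial.reflect_sum]
  refine sum_congr rfl fun a ha => ?_
  have ha : a ≤ j := Nat.lt_succ_iff.mp (mem_range.mp ha)
  rw [Polynomial.reflect_C_mul, show j + 1 = (a + 1) + (j - a) by omega,
    Polynomial.reflect_mul _ _ (Polynomial.natDegree_X_le.trans (by omega))
      (natDegree_Mj_le u hu0 _),
    ← pow_one Polynomial.X, Polynomial.reflect_monomial, Polynomial.revAt_le (by omega), pow_one,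
    Nat.add_sub_cancel]

end Mj

section atildeSeries

variable (u : ℕ → ℚ)

noncomputable def atildeSeries (j : ℕ) : ℚ⟦X⟧ := PowerSeries.mk fun h => atilde u h j

lemma atildeSeries_zero : atildeSeries u 0 = 1 := by
  ext (_ | h) <;> simp [atildeSeries, atilde, Mj_zero]

lemma atildeSeries_eq_reflect (hu0 : u 0 = 0) (j : ℕ) :
    atildeSeries u j = ((Polynomial.C (j.factorial : ℚ) * (Mj u j).reflect j : ℚ[X]) : ℚ⟦X⟧) := by
  ext h
  rw [atildeSeries, coeff_mk, Polynomial.coeff_coe, Polynomial.coeff_C_mul,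
    Polynomial.coeff_reflect, atilde]
  split_ifs with hhj
  · rw [Polynomial.revAt_le hhj]
  · rw [Polynomial.revAt_eq_self_of_lt (by omega), Polynomial.coeff_eq_zero_of_natDegree_lt
      ((natDegree_Mj_le u hu0 j).trans_lt (by omega)), mul_zero]

lemma atildeSeries_succ (hu0 : u 0 = 0) (j : ℕ) :
    atildeSeries u (j + 1) = ∑ a ∈ range (j + 1),
      (((a : ℚ) + 1) * u (a + 1) * j.descFactorial a) • (X ^ a * atildeSeries u (j - a)) := by
  have hpoly : Polynomial.C ((j + 1).factorial : ℚ) * (Mj u (j + 1)).reflect (j + 1) =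
      ∑ a ∈ range (j + 1), Polynomial.C (((a : ℚ) + 1) * u (a + 1) * j.descFactorial a) *
        (Polynomial.X ^ a *
          (Polynomial.C ((j - a).factorial : ℚ) * (Mj u (j - a)).reflect (j - a))) := by
    rw [Nat.factorial_succ, Nat.cast_mul, Nat.cast_succ, Polynomial.C_mul,
      mul_comm (Polynomial.C _), mul_assoc, reflect_Mj_succ u hu0 j, mul_sum]
    refine sum_congr rfl fun a ha => ?_
    rw [← Nat.factorial_mul_descFactorial (Nat.lt_succ_iff.mp (mem_range.mp ha))]
    simp only [Nat.cast_mul, map_mul]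
    ring
  rw [atildeSeries_eq_reflect u hu0, hpoly, ← Polynomial.coeToPowerSeries.ringHom_apply, map_sum]
  refine sum_congr rfl fun a _ => ?_
  simp only [Polynomial.coeToPowerSeries.ringHom_apply, Polynomial.coe_mul, Polynomial.coe_C,
    Polynomial.coe_pow, Polynomial.coe_X, smul_eq_C_mul, atildeSeries_eq_reflect u hu0]

lemma constantCoeff_atildeSeries (hu0 : u 0 = 0) (hu1 : u 1 = 1) (j : ℕ) :
    constantCoeff (atildeSeries u j) = 1 := by
  induction j with
  | zero => rw [atildeSeries_zero, map_one]
  | succ j ih => simp [atildeSeries_succ u hu0, sum_range_succ', ih, hu1]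

lemma Lh_eq_coeff_logOf (hu0 : u 0 = 0) (hu1 : u 1 = 1) (h j : ℕ) :
    Lh u h j = coeff h (logOf (atildeSeries u j)) := by
  have hV : (PowerSeries.mk fun s => if s = 0 then 0 else atilde u s j) = atildeSeries u j - 1 := by
    ext (_ | s)
    · have := constantCoeff_atildeSeries u hu0 hu1 j
      simp only [atildeSeries, ← coeff_zero_eq_constantCoeff_apply, coeff_mk] at this
      simp [atildeSeries, this]
    · simp [atildeSeries]
  rw [Lh, hV, ← coeff_logOf_one_add (by simp [constantCoeff_atildeSeries u hu0 hu1]),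
    add_sub_cancel]

end atildeSeries

/-- For arbitrary `u` with `u 0 = 0` and `u 1 = 1`, for every `h` there is a polynomial
of degree at most `h + 1` representing `j ↦ L_h(j)` on the naturals. -/
theorem exists_polynomial_Lh (u : ℕ → ℚ) (hu0 : u 0 = 0) (hu1 : u 1 = 1) (h : ℕ) :
    ∃ p : Polynomial ℚ, p.degree ≤ (h + 1 : ℕ) ∧
      ∀ j : ℕ, p.eval (j : ℚ) = Lh u h j := by
  have hcc := constantCoeff_atildeSeries u hu0 hu1
  have hunit : ∀ j, IsUnit (atildeSeries u j) :=
    fun j => isUnit_iff_constantCoeff.mpr (by rw [hcc]; exact isUnit_one)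
  set F : ℕ → ℚ⟦X⟧ˣ := fun j => (hunit j).unit
  have hmem := coeff_logOf_mem_polySeq (F := F) (c := fun a => ((a : ℚ) + 1) * u (a + 1))
    (by simpa [F] using atildeSeries_succ u hu0)
    (Units.ext (by simpa [F] using atildeSeries_zero u)) (by simpa [F] using hcc) h
  obtain ⟨p, hp, hpeval⟩ := polySeq.mem_iff.mp hmem
  exact ⟨p, Polynomial.natDegree_le_iff_degree_le.mp hp,
    fun j => by rw [hpeval, Lh_eq_coeff_logOf u hu0 hu1]; rfl⟩
end

section
/- In the general setup (arbitrary u with u(0)=0, u(1)=1), for every natural number h there exists a polynomial p with rational coefficients of degree at most 2h such that p(j) = ã_h(j) for every natural number j. -/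
/-! Since `u 0 = 0` and `u 1 = 1`, `U = x (1 + W)` with `W(0) = 0`. Hence
`[n^(j-h)] M_j = [x^j] U^(j-h) / (j-h)! = [x^h] (1 + W)^(j-h) / (j-h)!`, and expanding the
binomial (only `W^m` with `m ≤ h` reach `x^h`) gives
`ã_h(j) = j (j-1) ⋯ (j-h+1) · Σ_{m ≤ h} C(j-h, m) [x^h] W^m`.
Both factors are polynomials of degree `h` in `j`, and the falling factorial vanishes for
`j < h`, where `ã_h(j) = 0` by definition. -/

open Finset

section PowerSeriesCoefficients

open PowerSeries

/-- Each power `(n·U)^k` is `X^k` times a rational series, so `[n^d] M_j` only sees `k = d`. -/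
theorem coeff_Mj_of_le (u : ℕ → ℚ) {j d : ℕ} (hdj : d ≤ j) :
    (Mj u j).coeff d = (d.factorial : ℚ)⁻¹ * coeff j (mk u ^ d) := by
  have hF : (mk fun s => Polynomial.C (u s) * Polynomial.X) =
      map Polynomial.C (mk u) * C Polynomial.X := by
    ext s
    simp [coeff_mul_C]
  have hcoeff (k : ℕ) : coeff j ((mk fun s => Polynomial.C (u s) * Polynomial.X) ^ k) =
      Polynomial.C (coeff j (mk u ^ k)) * Polynomial.X ^ k := by
    rw [hF, mul_pow, ← map_pow, ← map_pow, coeff_mul_C, coeff_map]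
  rw [Mj, expPS, coeff_mk, Polynomial.finsetSum_coeff]
  simp only [hcoeff, Polynomial.coeff_smul, Polynomial.coeff_C_mul, Polynomial.coeff_X_pow,
    smul_eq_mul, mul_ite, mul_one, mul_zero]
  rw [sum_ite_eq]
  simp [Nat.lt_succ_iff.mpr hdj]

theorem PowerSeries.coeff_one_add_pow {R : Type*} [CommSemiring R] {W : R⟦X⟧}
    (hW : constantCoeff W = 0) (h k : ℕ) :
    coeff h ((1 + W) ^ k) = ∑ m ∈ range (h + 1), (k.choose m : R) * coeff h (W ^ m) := by
  have hvanish {m : ℕ} (hm : h < m) : coeff h (W ^ m) = 0 :=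
    X_pow_dvd_iff.mp (pow_dvd_pow_of_dvd (X_dvd_iff.mpr hW) m) h hm
  set f : ℕ → R := fun m => (k.choose m : R) * coeff h (W ^ m)
  have hk : ∑ m ∈ range (k + 1), f m = ∑ m ∈ range (k + h + 1), f m := by
    refine sum_subset (range_subset_range.mpr (by omega)) fun m _ hm => ?_
    simp [f, Nat.choose_eq_zero_of_lt (by simpa using hm : k < m)]
  have hh : ∑ m ∈ range (h + 1), f m = ∑ m ∈ range (k + h + 1), f m := by
    refine sum_subset (range_subset_range.mpr (by omega)) fun m _ hm => ?_
    simp [f, hvanish (by simpa using hm : h < m)]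
  rw [add_comm, add_pow, map_sum, hh, ← hk]
  refine sum_congr rfl fun m _ => ?_
  rw [one_pow, mul_one, ← map_natCast (C (R := R)), coeff_mul_C, mul_comm]

theorem atilde_eq_descFactorial_mul_sum_choose (u : ℕ → ℚ) (hu0 : u 0 = 0) (hu1 : u 1 = 1)
    {h j : ℕ} (hhj : h ≤ j) :
    atilde u h j = (j.descFactorial h : ℚ) * ∑ m ∈ range (h + 1),
      ((j - h).choose m : ℚ) * coeff h ((PowerSeries.mk (fun s => u (s + 1)) - 1) ^ m) := by
  set W : ℚ⟦X⟧ := PowerSeries.mk (fun s => u (s + 1)) - 1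
  have hU : PowerSeries.mk u = X * (1 + W) := by
    conv_lhs => rw [eq_X_mul_shift_add_const (PowerSeries.mk u)]
    simp [W, hu0]
  have hW : constantCoeff W = 0 := by simp [W, hu1]
  have hfac : ((j - h).factorial : ℚ) * j.descFactorial h = j.factorial := by
    exact_mod_cast Nat.factorial_mul_descFactorial hhj
  rw [atilde, if_pos hhj, coeff_Mj_of_le u (Nat.sub_le j h), hU, mul_pow, coeff_X_pow_mul',
    if_pos (Nat.sub_le j h), Nat.sub_sub_self hhj, coeff_one_add_pow hW, ← hfac]
  field_simp

end PowerSeriesCoefficients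

open Polynomial

theorem Polynomial.exists_natDegree_le_eval_natCast_eq_sum_choose (c : ℕ → ℚ) (N : ℕ) :
    ∃ p : ℚ[X], p.natDegree ≤ N ∧
      ∀ k : ℕ, p.eval (k : ℚ) = ∑ m ∈ range (N + 1), (k.choose m : ℚ) * c m := by
  refine ⟨∑ m ∈ range (N + 1), C (c m / m.factorial) * descPochhammer ℚ m, ?_, fun k => ?_⟩
  · refine natDegree_sum_le_of_forall_le _ _ fun m hm => ?_
    refine (natDegree_C_mul_le _ _).trans ?_
    rw [descPochhammer_natDegree]
    exact Nat.lt_succ_iff.mp (mem_range.mp hm)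
  · rw [eval_finsetSum]
    refine sum_congr rfl fun m _ => ?_
    rw [eval_mul, eval_C, descPochhammer_eval_eq_descFactorial,
      Nat.descFactorial_eq_factorial_mul_choose, Nat.cast_mul]
    field_simp

/-- For arbitrary `u` with `u 0 = 0` and `u 1 = 1`, for every `h` there is a polynomial
of degree at most `2h` representing `j ↦ ã_h(j)` on the naturals. -/
theorem exists_polynomial_atilde (u : ℕ → ℚ) (hu0 : u 0 = 0) (hu1 : u 1 = 1) (h : ℕ) :
    ∃ p : Polynomial ℚ, p.degree ≤ (2 * h : ℕ) ∧
      ∀ j : ℕ, p.eval (j : ℚ) = atilde u h j := by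
  obtain ⟨q, hq_deg, hq_eval⟩ := exists_natDegree_le_eval_natCast_eq_sum_choose
    (fun m => PowerSeries.coeff h ((PowerSeries.mk (fun s => u (s + 1)) - 1) ^ m)) h
  refine ⟨descPochhammer ℚ h * q.comp (X - C (h : ℚ)), ?_, fun j => ?_⟩
  · refine degree_le_of_natDegree_le (natDegree_mul_le.trans ?_)
    rw [descPochhammer_natDegree, natDegree_comp, natDegree_X_sub_C, mul_one]
    omega
  · rw [eval_mul, descPochhammer_eval_eq_descFactorial, eval_comp, eval_sub, eval_X, eval_C]
    by_cases hhj : h ≤ j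
    · rw [atilde_eq_descFactorial_mul_sum_choose u hu0 hu1 hhj, ← Nat.cast_sub hhj, hq_eval]
    · rw [atilde, if_neg hhj, Nat.descFactorial_eq_zero_iff_lt.mpr (by omega), Nat.cast_zero,
        zero_mul]
end

section
/- Let g ≥ 2, let C_1, …, C_g be pairwise disjoint nonempty finite sets with union C, and let σ be a permutation of C with w(σ) ≤ g−2. Then there exists a nonempty proper subset I of {1,…,g} such that σ(C_I) = C_I. -/
/-!
Build the bipartite graph whose vertices are the cycles of `σ` and the indices `1, …, g`, with
an edge from the cycle through `x` to the index of the block `C_i` containing `x`. It has at most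
`|C|` edges, so if it were connected then `#cycles + g ≤ |C| + 1`, i.e. `w(σ) ≥ g - 1`. Hence it
is disconnected, and the indices `I` in one connected component form a proper nonempty set; as
`x` and `σ x` lie on the same cycle, their blocks lie in the same component, so `σ(C_I) = C_I`.
-/

open scoped Classical

/-- The weight of a permutation of a finite set: the cardinality of the set minus the
number of orbits (cycles, counting fixed points as cycles). -/
noncomputable def permWeight {A : Type*} (σ : Equiv.Perm A) : ℕ :=
  Nat.card A - Nat.card (Quotient (MulAction.orbitRel (Subgroup.zpowers σ) A))

/-- `P` is a partition of `Fin g` into nonempty parts, presented as a finite set of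
pairwise disjoint nonempty finsets with union everything. -/
def IsSetPartition {g : ℕ} (P : Finset (Finset (Fin g))) : Prop :=
  (∀ I ∈ P, I.Nonempty) ∧
  (∀ I ∈ P, ∀ J ∈ P, I ≠ J → Disjoint I J) ∧
  P.sup id = Finset.univ

/-- A partition `P` of `{1,…,g}` admits a permutation `σ` of the ambient set if
`σ(C_I) = C_I` for every part `I` of `P`, where `C_I = ⋃_{i ∈ I} C_i`. -/
def Admits {g : ℕ} {α : Type*} [DecidableEq α] (C : Fin g → Finset α)
    (σ : Equiv.Perm α) (P : Finset (Finset (Fin g))) : Prop :=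
  ∀ I ∈ P, (I.biUnion C).image σ = I.biUnion C

open Finset SimpleGraph

namespace Equiv.Perm

variable {α β : Type*} (σ : Perm α) (f : α → β)

def cycleBlockGraph : SimpleGraph (Quotient (MulAction.orbitRel (Subgroup.zpowers σ) α) ⊕ β) :=
  fromEdgeSet (Set.range fun x => s(.inl (Quotient.mk'' x), .inr (f x)))

theorem orbitRel_mk_apply (x : α) :
    (Quotient.mk'' (σ x) : Quotient (MulAction.orbitRel (Subgroup.zpowers σ) α)) =
      Quotient.mk'' x :=
  Quotient.sound ⟨⟨σ, Subgroup.mem_zpowers σ⟩, rfl⟩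

theorem cycleBlockGraph_adj (x : α) :
    (σ.cycleBlockGraph f).Adj (.inl (Quotient.mk'' x)) (.inr (f x)) :=
  (fromEdgeSet_adj _).2 ⟨⟨x, rfl⟩, Sum.inl_ne_inr⟩

theorem cycleBlockGraph_reachable_apply (x : α) :
    (σ.cycleBlockGraph f).Reachable (.inr (f x)) (.inr (f (σ x))) := by
  refine (cycleBlockGraph_adj σ f x).reachable.symm.trans ?_
  rw [← orbitRel_mk_apply σ x]
  exact (cycleBlockGraph_adj σ f (σ x)).reachable

theorem card_edgeSet_cycleBlockGraph_le [Finite α] :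
    Nat.card (σ.cycleBlockGraph f).edgeSet ≤ Nat.card α := by
  rw [cycleBlockGraph, edgeSet_fromEdgeSet]
  exact (Nat.card_mono (Set.finite_range _) Set.sdiff_subset).trans (Finite.card_range_le _)

theorem card_orbits_add_card_le_of_connected [Finite α] [Finite β]
    (h : (σ.cycleBlockGraph f).Connected) :
    Nat.card (Quotient (MulAction.orbitRel (Subgroup.zpowers σ) α)) + Nat.card β ≤
      Nat.card α + 1 := by
  rw [← Nat.card_sum]
  exact h.card_vert_le_card_edgeSet_add_one.trans
    (Nat.add_le_add_right (card_edgeSet_cycleBlockGraph_le σ f) 1)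

theorem cycleBlockGraph_connected [Nonempty β]
    (h : ∀ b b', (σ.cycleBlockGraph f).Reachable (.inr b) (.inr b')) :
    (σ.cycleBlockGraph f).Connected := by
  have reach_inr : ∀ v, ∃ b, (σ.cycleBlockGraph f).Reachable v (.inr b) := by
    rintro (q | b)
    · induction q using Quotient.inductionOn' with
      | h x => exact ⟨f x, (cycleBlockGraph_adj σ f x).reachable⟩
    · exact ⟨b, .rfl⟩
  refine ⟨fun u v => ?_⟩
  obtain ⟨b, hub⟩ := reach_inr u
  obtain ⟨b', hvb'⟩ := reach_inr v
  exact hub.trans ((h b b').trans hvb'.symm)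

end Equiv.Perm

theorem Finset.image_perm_eq_of_forall_mem {α : Type*} [DecidableEq α] {σ : Equiv.Perm α}
    {s : Finset α} (h : ∀ x ∈ s, σ x ∈ s) : s.image σ = s :=
  eq_of_subset_of_card_le (image_subset_iff.2 h) (card_image_of_injective _ σ.injective).ge

theorem Finset.exists_index_of_pairwise_disjoint {α ι : Type*} [Fintype α] [DecidableEq α]
    [Fintype ι] (C : ι → Finset α) (hdisj : ∀ i j, i ≠ j → Disjoint (C i) (C j))
    (hcover : univ.biUnion C = univ) : ∃ f : α → ι, ∀ x i, x ∈ C i ↔ f x = i := by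
  have hmem : ∀ x, ∃ i, x ∈ C i := fun x => by
    simpa using hcover.ge (mem_univ x)
  choose f hf using hmem
  refine ⟨f, fun x i => ⟨fun hx => ?_, fun h => h ▸ hf x⟩⟩
  by_contra hne
  exact disjoint_left.1 (hdisj _ _ hne) (hf x) hx

theorem exists_proper_invariant_subset_general {α : Type*} [Fintype α] [DecidableEq α]
    (g : ℕ) (hg : 2 ≤ g) (C : Fin g → Finset α)
    (hdisj : ∀ i j, i ≠ j → Disjoint (C i) (C j))
    (hcover : Finset.univ.biUnion C = Finset.univ)
    (σ : Equiv.Perm α) (hw : permWeight σ ≤ g - 2) :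
    ∃ I : Finset (Fin g), I.Nonempty ∧ I ≠ Finset.univ ∧
      (I.biUnion C).image σ = I.biUnion C := by
  obtain ⟨f, hf⟩ := exists_index_of_pairwise_disjoint C hdisj hcover
  have : Nonempty (Fin g) := ⟨⟨0, by omega⟩⟩
  have hdisconn : ¬ (σ.cycleBlockGraph f).Connected := fun h => by
    have hcard := σ.card_orbits_add_card_le_of_connected f h
    rw [Nat.card_fin] at hcard
    unfold permWeight at hw
    omega
  obtain ⟨i, j, hij⟩ : ∃ i j, ¬ (σ.cycleBlockGraph f).Reachable (.inr i) (.inr j) := by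
    by_contra! h
    exact hdisconn (σ.cycleBlockGraph_connected f h)
  set I : Finset (Fin g) := univ.filter fun k => (σ.cycleBlockGraph f).Reachable (.inr i) (.inr k)
  refine ⟨I, ⟨i, by simp [I]⟩, fun h => hij ?_, ?_⟩
  · simpa [I] using h.ge (mem_univ j)
  · refine image_perm_eq_of_forall_mem fun x hx => ?_
    simp only [I, mem_biUnion, mem_filter, mem_univ, true_and, hf, exists_eq_right'] at hx ⊢
    exact hx.trans (σ.cycleBlockGraph_reachable_apply f x)

/-- If `C_1, …, C_g` (`g ≥ 2`) are pairwise disjoint nonempty finite sets with union `C`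
and `σ` is a permutation of `C` of weight at most `g − 2`, then there is a nonempty
proper subset `I` of `{1,…,g}` with `σ(C_I) = C_I`. -/
theorem exists_proper_invariant_subset {α : Type*} [Fintype α] [DecidableEq α]
    (g : ℕ) (hg : 2 ≤ g) (C : Fin g → Finset α)
    (hne : ∀ i, (C i).Nonempty)
    (hdisj : ∀ i j, i ≠ j → Disjoint (C i) (C j))
    (hcover : Finset.univ.biUnion C = Finset.univ)
    (σ : Equiv.Perm α) (hw : permWeight σ ≤ g - 2) :
    ∃ I : Finset (Fin g), I.Nonempty ∧ I ≠ Finset.univ ∧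
      (I.biUnion C).image σ = I.biUnion C :=
  exists_proper_invariant_subset_general g hg C hdisj hcover σ hw
end

section
/- Let g ≥ 1, let C_1, …, C_g be pairwise disjoint nonempty finite sets with union C, let σ be a permutation of C, and let m be the number of parts of the finest partition of {1,…,g} admitting σ (i.e., the unique partition admitting σ that refines every partition admitting σ). Then for every r with 1 ≤ r ≤ g, the number of partitions of {1,…,g} into r nonempty parts that admit σ equals S(m,r), the number of partitions of an m-element set into exactly r nonempty parts. -/
open scoped Classical

/-- A partition `Q` refines a partition `P` if every part of `Q` is contained in some
part of `P`. -/
def RefinesPart {g : ℕ} (Q P : Finset (Finset (Fin g))) : Prop :=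
  ∀ I ∈ Q, ∃ I' ∈ P, I ⊆ I'

/-- `stirlingSecond m r` is the Stirling number of the second kind: the number of
partitions of an `m`-element set into exactly `r` nonempty parts. -/
noncomputable def stirlingSecond (m r : ℕ) : ℕ :=
  ((Finset.univ : Finset (Finset (Finset (Fin m)))).filter
    (fun P => IsSetPartition P ∧ P.card = r)).card

section Aux

variable {g : ℕ}

lemma isSetPartition_exists_mem {P : Finset (Finset (Fin g))} (hP : IsSetPartition P)
    (i : Fin g) : ∃ I ∈ P, i ∈ I := by
  have h : i ∈ P.sup id := by rw [hP.2.2]; exact Finset.mem_univ i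
  simpa [Finset.mem_sup] using h

lemma isSetPartition_eq_of_mem {P : Finset (Finset (Fin g))} (hP : IsSetPartition P)
    {I I' : Finset (Fin g)} (hI : I ∈ P) (hI' : I' ∈ P) {i : Fin g}
    (h1 : i ∈ I) (h2 : i ∈ I') : I = I' := by
  by_contra h
  exact Finset.disjoint_left.mp (hP.2.1 I hI I' hI' h) h1 h2

/-- Every part of `P` is a union of parts of `J`. -/
def CoarsensJ (J P : Finset (Finset (Fin g))) : Prop :=
  ∀ I ∈ P, ∀ i ∈ I, ∀ K ∈ J, i ∈ K → K ⊆ I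

lemma coarsens_of_refines {J P : Finset (Finset (Fin g))}
    (hP : IsSetPartition P) (href : RefinesPart J P) : CoarsensJ J P := by
  intro I hI i hiI K hK hiK
  obtain ⟨I', hI', hKI'⟩ := href K hK
  rwa [isSetPartition_eq_of_mem hP hI hI' hiI (hKI' hiK)]

lemma part_eq_biUnion {J P : Finset (Finset (Fin g))} (hJ : IsSetPartition J)
    (hc : CoarsensJ J P) {I : Finset (Fin g)} (hI : I ∈ P) :
    I = (J.filter (fun K => K ⊆ I)).biUnion id := by
  ext i
  simp only [Finset.mem_biUnion, Finset.mem_filter, id]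
  constructor
  · intro hi
    obtain ⟨K, hK, hiK⟩ := isSetPartition_exists_mem hJ i
    exact ⟨K, ⟨hK, hc I hI i hi K hK hiK⟩, hiK⟩
  · rintro ⟨K, ⟨hK, hKI⟩, hiK⟩
    exact hKI hiK

lemma admits_of_coarsens {α : Type*} [DecidableEq α] {C : Fin g → Finset α}
    {σ : Equiv.Perm α} {J P : Finset (Finset (Fin g))} (hJ : IsSetPartition J)
    (hJadm : Admits C σ J) (hc : CoarsensJ J P) : Admits C σ P := by
  intro I hI
  rw [part_eq_biUnion hJ hc hI, Finset.biUnion_biUnion, Finset.biUnion_image]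
  refine Finset.biUnion_congr rfl ?_
  intro K hK
  exact hJadm K (Finset.mem_filter.mp hK).1

end Aux

/-- Let `C_1, …, C_g` (`g ≥ 1`) be pairwise disjoint nonempty finite sets with union `C`,
`σ` a permutation of `C`, and `m` the number of parts of the finest partition of
`{1,…,g}` admitting `σ`.  Then for `1 ≤ r ≤ g` the number of partitions of `{1,…,g}`
into `r` nonempty parts admitting `σ` is the Stirling number `S(m,r)`. -/
theorem card_admitting_partitions_eq_stirlingSecond {α : Type*} [Fintype α] [DecidableEq α]
    (g : ℕ) (hg : 1 ≤ g) (C : Fin g → Finset α)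
    (hne : ∀ i, (C i).Nonempty)
    (hdisj : ∀ i j, i ≠ j → Disjoint (C i) (C j))
    (hcover : Finset.univ.biUnion C = Finset.univ)
    (σ : Equiv.Perm α)
    (J : Finset (Finset (Fin g)))
    (hJ : IsSetPartition J ∧ Admits C σ J)
    (hJfinest : ∀ P : Finset (Finset (Fin g)), IsSetPartition P → Admits C σ P →
      RefinesPart J P) :
    ∀ r : ℕ, 1 ≤ r → r ≤ g →
      (((Finset.univ : Finset (Finset (Finset (Fin g)))).filter
        (fun P => IsSetPartition P ∧ Admits C σ P ∧ P.card = r)).card : ℕ) =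
        stirlingSecond J.card r := by
  obtain ⟨hJp, hJadm⟩ := hJ
  intro r hr1 hrg
  unfold stirlingSecond
  set m := J.card with hm
  let e : {x // x ∈ J} ≃ Fin m := J.equivFin
  let f : Finset (Fin g) → Finset (Fin m) :=
    fun I => (J.attach.filter fun K => K.1 ⊆ I).image e
  let u : Finset (Fin m) → Finset (Fin g) :=
    fun B => B.biUnion fun b => ((e.symm b : {x // x ∈ J}) : Finset (Fin g))
  have hf : ∀ (I : Finset (Fin g)) (b : Fin m),
      b ∈ f I ↔ ((e.symm b : {x // x ∈ J}) : Finset (Fin g)) ⊆ I := by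
    intro I b
    simp only [f, Finset.mem_image, Finset.mem_filter, Finset.mem_attach, true_and]
    constructor
    · rintro ⟨K, hK, rfl⟩; simpa using hK
    · intro h; exact ⟨e.symm b, h, e.apply_symm_apply b⟩
  have hu : ∀ (B : Finset (Fin m)) (i : Fin g),
      i ∈ u B ↔ ∃ b ∈ B, i ∈ ((e.symm b : {x // x ∈ J}) : Finset (Fin g)) := by
    intro B i; simp [u, Finset.mem_biUnion]
  have huf : ∀ {P : Finset (Finset (Fin g))}, CoarsensJ J P → ∀ I ∈ P, u (f I) = I := by
    intro P hc I hI
    ext i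
    rw [hu]
    constructor
    · rintro ⟨b, hb, hib⟩; exact (hf I b).mp hb hib
    · intro hi
      obtain ⟨K, hK, hiK⟩ := isSetPartition_exists_mem hJp i
      refine ⟨e ⟨K, hK⟩, ?_, ?_⟩
      · rw [hf]; simpa using hc I hI i hi K hK hiK
      · simpa using hiK
  have hfu : ∀ {Q : Finset (Finset (Fin m))}, IsSetPartition Q → ∀ B ∈ Q, f (u B) = B := by
    intro Q hQ B hB
    ext b
    rw [hf]
    constructor
    · intro hsub
      obtain ⟨i, hi⟩ := hJp.1 _ (e.symm b).2
      obtain ⟨b', hb', hib'⟩ := (hu B i).mp (hsub hi)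
      have hKeq : ((e.symm b : {x // x ∈ J}) : Finset (Fin g)) = (e.symm b' : {x // x ∈ J}) :=
        isSetPartition_eq_of_mem hJp (e.symm b).2 (e.symm b').2 hi hib'
      have : b = b' := by
        have := e.symm.injective (Subtype.ext hKeq)
        simpa using this
      rwa [this]
    · intro hb i hi
      exact (hu B i).mpr ⟨b, hb, hi⟩
  -- the two finsets
  refine Finset.card_bij' (fun P _ => P.image f) (fun Q _ => Q.image u) ?_ ?_ ?_ ?_
  · -- forward membership
    intro P hP
    rw [Finset.mem_filter] at hP
    obtain ⟨-, hPp, hPadm, hPr⟩ := hP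
    have hc : CoarsensJ J P := coarsens_of_refines hPp (hJfinest P hPp hPadm)
    have hinj : Set.InjOn f ↑P := by
      intro a ha b hb hab
      rw [← huf hc a ha, ← huf hc b hb, hab]
    rw [Finset.mem_filter]
    refine ⟨Finset.mem_univ _, ⟨?_, ?_, ?_⟩, ?_⟩
    · -- nonempty parts
      intro B hB
      obtain ⟨I, hI, rfl⟩ := Finset.mem_image.mp hB
      obtain ⟨i, hi⟩ := hPp.1 I hI
      obtain ⟨K, hK, hiK⟩ := isSetPartition_exists_mem hJp i
      exact ⟨e ⟨K, hK⟩, by rw [hf]; simpa using hc I hI i hi K hK hiK⟩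
    · -- disjoint parts
      intro B hB B' hB' hne'
      obtain ⟨I, hI, rfl⟩ := Finset.mem_image.mp hB
      obtain ⟨I', hI', rfl⟩ := Finset.mem_image.mp hB'
      have hII' : I ≠ I' := fun h => hne' (by rw [h])
      rw [Finset.disjoint_left]
      intro b hb hb'
      obtain ⟨i, hi⟩ := hJp.1 _ (e.symm b).2
      exact Finset.disjoint_left.mp (hPp.2.1 I hI I' hI' hII')
        ((hf I b).mp hb hi) ((hf I' b).mp hb' hi)
    · -- cover
      apply Finset.eq_univ_of_forall
      intro b
      obtain ⟨i, hi⟩ := hJp.1 _ (e.symm b).2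
      obtain ⟨I, hI, hiI⟩ := isSetPartition_exists_mem hPp i
      rw [Finset.mem_sup]
      refine ⟨f I, Finset.mem_image_of_mem f hI, ?_⟩
      rw [id, hf]
      exact hc I hI i hiI _ (e.symm b).2 hi
    · rw [Finset.card_image_of_injOn hinj, hPr]
  · -- backward membership
    intro Q hQ
    rw [Finset.mem_filter] at hQ
    obtain ⟨-, hQp, hQr⟩ := hQ
    have hcu : CoarsensJ J (Q.image u) := by
      intro I hI i hiI K hK hiK
      obtain ⟨B, hB, rfl⟩ := Finset.mem_image.mp hI
      obtain ⟨b', hb', hib'⟩ := (hu B i).mp hiI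
      have hKeq : K = ((e.symm b' : {x // x ∈ J}) : Finset (Fin g)) :=
        isSetPartition_eq_of_mem hJp hK (e.symm b').2 hiK hib'
      rw [hKeq]
      intro x hx
      exact (hu B x).mpr ⟨b', hb', hx⟩
    have hQpart : IsSetPartition (Q.image u) := by
      refine ⟨?_, ?_, ?_⟩
      · intro I hI
        obtain ⟨B, hB, rfl⟩ := Finset.mem_image.mp hI
        obtain ⟨b, hb⟩ := hQp.1 B hB
        obtain ⟨i, hi⟩ := hJp.1 _ (e.symm b).2
        exact ⟨i, (hu B i).mpr ⟨b, hb, hi⟩⟩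
      · intro I hI I' hI' hne'
        obtain ⟨B, hB, rfl⟩ := Finset.mem_image.mp hI
        obtain ⟨B', hB', rfl⟩ := Finset.mem_image.mp hI'
        have hBB' : B ≠ B' := fun h => hne' (by rw [h])
        rw [Finset.disjoint_left]
        intro i hi hi'
        obtain ⟨b, hb, hib⟩ := (hu B i).mp hi
        obtain ⟨b', hb', hib'⟩ := (hu B' i).mp hi'
        have hKeq : ((e.symm b : {x // x ∈ J}) : Finset (Fin g)) = (e.symm b' : {x // x ∈ J}) :=
          isSetPartition_eq_of_mem hJp (e.symm b).2 (e.symm b').2 hib hib'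
        have hbb : b = b' := by
          have := e.symm.injective (Subtype.ext hKeq)
          simpa using this
        exact Finset.disjoint_left.mp (hQp.2.1 B hB B' hB' hBB') hb (hbb ▸ hb')
      · apply Finset.eq_univ_of_forall
        intro i
        obtain ⟨K, hK, hiK⟩ := isSetPartition_exists_mem hJp i
        obtain ⟨B, hB, hbB⟩ := isSetPartition_exists_mem hQp (e ⟨K, hK⟩)
        rw [Finset.mem_sup]
        refine ⟨u B, Finset.mem_image_of_mem u hB, ?_⟩
        rw [id, hu]
        exact ⟨e ⟨K, hK⟩, hbB, by simpa using hiK⟩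
    have hinj : Set.InjOn u ↑Q := by
      intro a ha b hb hab
      rw [← hfu hQp a ha, ← hfu hQp b hb, hab]
    rw [Finset.mem_filter]
    exact ⟨Finset.mem_univ _, hQpart, admits_of_coarsens hJp hJadm hcu,
      by rw [Finset.card_image_of_injOn hinj, hQr]⟩
  · -- left inverse
    intro P hP
    rw [Finset.mem_filter] at hP
    obtain ⟨-, hPp, hPadm, hPr⟩ := hP
    have hc : CoarsensJ J P := coarsens_of_refines hPp (hJfinest P hPp hPadm)
    show (P.image f).image u = P
    rw [Finset.image_image,
      show P.image (u ∘ f) = P.image id from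
        Finset.image_congr (fun I hI => huf hc I hI), Finset.image_id]
  · -- right inverse
    intro Q hQ
    rw [Finset.mem_filter] at hQ
    obtain ⟨-, hQp, hQr⟩ := hQ
    show (Q.image u).image f = Q
    rw [Finset.image_image,
      show Q.image (f ∘ u) = Q.image id from
        Finset.image_congr (fun B hB => hfu hQp B hB), Finset.image_id]
end

section
/- For every natural number w there exists a polynomial p with rational coefficients of degree exactly 2w such that p(n) = c(n, n−w) for every natural number n ≥ w. -/
open Polynomial Finset

/-- `stirlingFirst n k` is the unsigned Stirling number of the first kind: the
coefficient of `x^k` in the ascending factorial `x(x+1)⋯(x+n−1)`. -/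
noncomputable def stirlingFirst (n k : ℕ) : ℕ :=
  (ascPochhammer ℕ n).coeff k

/-- The Faulhaber polynomial whose value at `n` is `∑ k < n, k^j`. -/
noncomputable def faulhaber (j : ℕ) : Polynomial ℚ :=
  ∑ i ∈ range (j + 1), C (_root_.bernoulli i * ((j + 1).choose i) / (j + 1)) * X ^ (j + 1 - i)

lemma faulhaber_eval (j n : ℕ) :
    (faulhaber j).eval (n : ℚ) = ∑ k ∈ range n, (k : ℚ) ^ j := by
  rw [faulhaber, eval_finset_sum, sum_range_pow]
  refine Finset.sum_congr rfl fun i _ => ?_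
  simp only [eval_mul, eval_C, eval_pow, eval_X]
  ring

lemma faulhaber_natDegree_le (j : ℕ) : (faulhaber j).natDegree ≤ j + 1 := by
  refine (natDegree_sum_le _ _).trans ?_
  rw [Finset.fold_max_le]
  refine ⟨Nat.zero_le _, fun i _ => ?_⟩
  refine (natDegree_C_mul_le _ _).trans ?_
  simp only [natDegree_X_pow]
  omega

lemma faulhaber_coeff (j : ℕ) : (faulhaber j).coeff (j + 1) = 1 / (j + 1) := by
  rw [faulhaber, finset_sum_coeff]
  rw [Finset.sum_eq_single 0]
  · simp
  · intro i hi hne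
    rw [coeff_C_mul, coeff_X_pow, if_neg (by simp at hi; omega)]
    simp
  · simp

/-- Discrete antiderivative of a polynomial, with exact degree. -/
lemma exists_sum_poly (q : Polynomial ℚ) (hq : q ≠ 0) :
    ∃ Q : Polynomial ℚ, Q.degree = (q.natDegree + 1 : ℕ) ∧
      ∀ n : ℕ, Q.eval (n : ℚ) = ∑ k ∈ range n, q.eval (k : ℚ) := by
  set d := q.natDegree with hd
  refine ⟨∑ j ∈ range (d + 1), C (q.coeff j) * faulhaber j, ?_, ?_⟩
  · have hle : (∑ j ∈ range (d + 1), C (q.coeff j) * faulhaber j).natDegree ≤ d + 1 := by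
      refine (natDegree_sum_le _ _).trans ?_
      rw [Finset.fold_max_le]
      refine ⟨Nat.zero_le _, fun j hj => ?_⟩
      refine (natDegree_C_mul_le _ _).trans ((faulhaber_natDegree_le j).trans ?_)
      simp at hj; omega
    have hco : (∑ j ∈ range (d + 1), C (q.coeff j) * faulhaber j).coeff (d + 1)
        = q.coeff d * (1 / (d + 1)) := by
      rw [finset_sum_coeff, Finset.sum_eq_single d]
      · rw [coeff_C_mul, faulhaber_coeff]
      · intro j hj hne
        rw [coeff_C_mul, coeff_eq_zero_of_natDegree_lt
          ((faulhaber_natDegree_le j).trans_lt (by simp at hj; omega)), mul_zero]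
      · simp
    have hne : q.coeff d * (1 / (d + 1) : ℚ) ≠ 0 := by
      apply mul_ne_zero
      · exact mt leadingCoeff_eq_zero.mp hq
      · have : ((d : ℚ) + 1) ≠ 0 := by positivity
        simp [this]
    have hne' : (∑ j ∈ range (d + 1), C (q.coeff j) * faulhaber j).coeff (d + 1) ≠ 0 :=
      hco ▸ hne
    have h1 : d + 1 ≤ (∑ j ∈ range (d + 1), C (q.coeff j) * faulhaber j).natDegree :=
      le_natDegree_of_ne_zero hne'
    have hQne : (∑ j ∈ range (d + 1), C (q.coeff j) * faulhaber j) ≠ 0 := by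
      intro h; rw [h] at hne'; simp at hne'
    rw [degree_eq_natDegree hQne]
    exact congrArg Nat.cast (le_antisymm hle h1)
  · intro n
    rw [eval_finset_sum]
    simp only [eval_mul, eval_C, faulhaber_eval]
    simp_rw [Finset.mul_sum]
    rw [Finset.sum_comm]
    refine Finset.sum_congr rfl fun k _ => ?_
    rw [eval_eq_sum_range]

lemma stirlingFirst_rec (n k : ℕ) :
    stirlingFirst (n + 1) (k + 1) = stirlingFirst n k + n * stirlingFirst n (k + 1) := by
  unfold stirlingFirst
  rw [ascPochhammer_succ_right, mul_add, coeff_add, coeff_mul_X,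
    ← C_eq_natCast, coeff_mul_C, mul_comm]
  simp

lemma stirlingFirst_self (n : ℕ) : stirlingFirst n n = 1 := by
  unfold stirlingFirst
  have h : (ascPochhammer ℕ n).Monic := monic_ascPochhammer ℕ n
  have hmd := h.leadingCoeff
  rwa [Polynomial.leadingCoeff, ascPochhammer_natDegree ℕ n] at hmd

lemma stirlingFirst_zero (n : ℕ) (hn : n ≠ 0) : stirlingFirst n 0 = 0 := by
  unfold stirlingFirst
  rw [coeff_zero_eq_eval_zero, ascPochhammer_eval_zero, if_neg hn]

/-- For every `w` there is a polynomial of degree exactly `2w` whose value at every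
natural `n ≥ w` is the Stirling number of the first kind `c(n, n−w)`. -/
theorem exists_polynomial_stirlingFirst (w : ℕ) :
    ∃ p : Polynomial ℚ, p.degree = (2 * w : ℕ) ∧
      ∀ n : ℕ, w ≤ n → p.eval (n : ℚ) = stirlingFirst n (n - w) := by
  induction w with
  | zero =>
    refine ⟨1, by simp, fun n _ => ?_⟩
    simp [stirlingFirst_self]
  | succ w ih =>
    obtain ⟨p, hdeg, hp⟩ := ih
    have hpne : p ≠ 0 := by
      rw [← Polynomial.degree_ne_bot, hdeg]
      exact_mod_cast WithBot.coe_ne_bot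
    set q : Polynomial ℚ := X * p with hq
    have hqne : q ≠ 0 := mul_ne_zero X_ne_zero hpne
    have hpd : p.natDegree = 2 * w := natDegree_eq_of_degree_eq_some hdeg
    have hqd : q.natDegree = 2 * w + 1 := by
      rw [hq, natDegree_mul X_ne_zero hpne, natDegree_X, hpd]; omega
    obtain ⟨Q, hQdeg, hQ⟩ := exists_sum_poly q hqne
    refine ⟨Q - C (Q.eval ((w + 1 : ℕ) : ℚ)), ?_, ?_⟩
    · rw [degree_sub_eq_left_of_degree_lt, hQdeg, hqd]
      · exact congrArg Nat.cast (by omega)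
      · refine (degree_C_le).trans_lt ?_
        rw [hQdeg, hqd]
        exact_mod_cast Nat.succ_pos (2 * w + 1)
    · intro n hn
      induction n, hn using Nat.le_induction with
      | base =>
        simp [stirlingFirst_zero (w + 1) (by omega)]
      | succ n hn ihn =>
        have hrec : stirlingFirst (n + 1) (n + 1 - (w + 1))
            = stirlingFirst n (n - (w + 1)) + n * stirlingFirst n (n - w) := by
          have h1 : n + 1 - (w + 1) = (n - (w + 1)) + 1 := by omega
          have h2 : n - w = (n - (w + 1)) + 1 := by omega
          rw [h1, h2, stirlingFirst_rec]
        rw [hrec]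
        have heval : Q.eval ((n + 1 : ℕ) : ℚ) = Q.eval (n : ℚ) + q.eval (n : ℚ) := by
          rw [hQ, hQ, Finset.sum_range_succ]
        simp only [eval_sub, eval_C] at ihn ⊢
        push_cast
        rw [show ((n : ℚ) + 1) = ((n + 1 : ℕ) : ℚ) by push_cast; ring, heval]
        have hpn : p.eval (n : ℚ) = stirlingFirst n (n - w) := hp n (by omega)
        rw [hq]
        simp only [eval_mul, eval_X]
        rw [hpn]
        push_cast at ihn ⊢
        linarith [ihn]
end
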